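/- arXiv:1003.4206 — 3 statements merged into one kernel-verified Lean document; each statement's English description precedes it below -/
import Mathlib

section
/- Let H be a real Hilbert space, D a linear subspace of H, and L : D → H a linear map. Let N ⊆ H denote the kernel of L regarded as a subspace of H; assume N is finite-dimensional of dimension m, that the range of L equals the orthogonal complement N^⊥ of N in H, and that u ∈ H satisfies u ∉ N^⊥. Then the set {L v − ν·u : v ∈ D, ⟨u, v⟩ = 0, ν ∈ ℝ} equals the linear subspace N^⊥ + ℝ·u of H; this subspace is closed in H, and the quotient H/(N^⊥ + ℝ·u) has dimension m − 1. -/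
/-!
Pick `k ∈ ker L` with `⟪u, k⟫ ≠ 0`; subtracting a multiple of `k` moves any `v ∈ D` into the
hyperplane `⟪u, v⟫ = 0` without changing `L v`, so the constraint does not shrink the range
`Nᗮ`. For the codimension, `H ⧸ Nᗮ ≃ N` has dimension `m` and `u` has nonzero image there.
-/

open RealInnerProductSpace

namespace LinearMap

variable {𝕜 M E : Type*} [Field 𝕜] [AddCommGroup M] [Module 𝕜 M] [AddCommGroup E] [Module 𝕜 E]

theorem map_ker_eq_range_of_not_ker_le {L : M →ₗ[𝕜] E} {φ : M →ₗ[𝕜] 𝕜}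
    (h : ¬ ker L ≤ ker φ) : (ker φ).map L = range L := by
  obtain ⟨k, hLk, hφk⟩ := SetLike.not_le_iff_exists.mp h
  refine le_antisymm map_le_range ?_
  rintro _ ⟨v, rfl⟩
  refine ⟨v - (φ v / φ k) • k, ?_, ?_⟩
  · simp [div_mul_cancel₀ _ (show φ k ≠ 0 from hφk)]
  · simp [mem_ker.mp hLk]

theorem setOf_sub_smul_eq_range_sup_span {L : M →ₗ[𝕜] E} {φ : M →ₗ[𝕜] 𝕜}
    (h : ¬ ker L ≤ ker φ) (u : E) :
    {x : E | ∃ v : M, ∃ ν : 𝕜, φ v = 0 ∧ x = L v - ν • u} = ↑(range L ⊔ 𝕜 ∙ u) := by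
  ext x
  simp only [Set.mem_ofPred_eq, SetLike.mem_coe, Submodule.mem_sup,
    Submodule.mem_span_singleton, ← map_ker_eq_range_of_not_ker_le h, Submodule.mem_map,
    mem_ker]
  constructor
  · rintro ⟨v, ν, hv, rfl⟩
    exact ⟨L v, ⟨v, hv, rfl⟩, -ν • u, ⟨-ν, rfl⟩, by rw [neg_smul, sub_eq_add_neg]⟩
  · rintro ⟨_, ⟨v, hv, rfl⟩, _, ⟨c, rfl⟩, rfl⟩
    exact ⟨v, -c, hv, by rw [neg_smul, sub_neg_eq_add]⟩

end LinearMap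

namespace Submodule

section Field

variable {𝕜 M : Type*} [Field 𝕜] [AddCommGroup M] [Module 𝕜 M]

theorem finiteDimensional_quotient_of_le {S T : Submodule 𝕜 M} [FiniteDimensional 𝕜 (M ⧸ S)]
    (h : S ≤ T) : FiniteDimensional 𝕜 (M ⧸ T) :=
  Module.Finite.of_surjective _ (factor_surjective h)

theorem finrank_quotient_sup_span_singleton_add_one {S : Submodule 𝕜 M}
    [FiniteDimensional 𝕜 (M ⧸ S)] {u : M} (hu : u ∉ S) :
    Module.finrank 𝕜 (M ⧸ (S ⊔ 𝕜 ∙ u)) + 1 = Module.finrank 𝕜 (M ⧸ S) := by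
  have hmk : S.mkQ u ≠ 0 := by simpa using hu
  rw [← (quotientQuotientEquivQuotientSup S (𝕜 ∙ u)).finrank_eq, map_span, Set.image_singleton,
    ← finrank_span_singleton (K := 𝕜) hmk]
  exact finrank_quotient_add_finrank (𝕜 ∙ S.mkQ u)

end Field

section InnerProduct

variable {𝕜 E : Type*} [RCLike 𝕜] [NormedAddCommGroup E] [InnerProductSpace 𝕜 E]

noncomputable def quotientOrthogonalEquiv (K : Submodule 𝕜 E) [K.HasOrthogonalProjection] :
    (E ⧸ Kᗮ) ≃ₗ[𝕜] K :=
  (quotientEquivOrthogonal Kᗮ).toLinearEquiv.trans (LinearEquiv.ofEq _ _ K.orthogonal_orthogonal)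

instance (K : Submodule 𝕜 E) [FiniteDimensional 𝕜 K] : FiniteDimensional 𝕜 (E ⧸ Kᗮ) :=
  Module.Finite.equiv K.quotientOrthogonalEquiv.symm

theorem finrank_quotient_orthogonal (K : Submodule 𝕜 E) [FiniteDimensional 𝕜 K] :
    Module.finrank 𝕜 (E ⧸ Kᗮ) = Module.finrank 𝕜 K :=
  K.quotientOrthogonalEquiv.finrank_eq

end InnerProduct

end Submodule

theorem image_of_shifted_operator_general
    (H : Type*) [NormedAddCommGroup H] [InnerProductSpace ℝ H]
    (D : Submodule ℝ H) (L : D →ₗ[ℝ] H)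
    (N : Submodule ℝ H) (hN : N = (LinearMap.ker L).map D.subtype)
    (m : ℕ) [FiniteDimensional ℝ N] (hm : Module.finrank ℝ N = m)
    (hrange : LinearMap.range L = Nᗮ)
    (u : H) (hu : u ∉ Nᗮ) :
    {x : H | ∃ v : D, ∃ ν : ℝ, ⟪u, (v : H)⟫ = 0 ∧ x = L v - ν • u}
        = ((Nᗮ ⊔ ℝ ∙ u : Submodule ℝ H) : Set H) ∧
      IsClosed ((Nᗮ ⊔ ℝ ∙ u : Submodule ℝ H) : Set H) ∧
      FiniteDimensional ℝ (H ⧸ (Nᗮ ⊔ ℝ ∙ u : Submodule ℝ H)) ∧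
      Module.finrank ℝ (H ⧸ (Nᗮ ⊔ ℝ ∙ u : Submodule ℝ H)) = m - 1 := by
  have hker : ¬ LinearMap.ker L ≤ LinearMap.ker ((innerₛₗ ℝ u).comp D.subtype) := by
    intro hle
    refine hu fun y hy => ?_
    rw [hN] at hy
    obtain ⟨k, hk, rfl⟩ := hy
    rw [real_inner_comm]
    exact hle hk
  refine ⟨?_,
    Submodule.isClosed_sup_finiteDimensional _ _ N.isClosed_orthogonal,
    Submodule.finiteDimensional_quotient_of_le le_sup_left, ?_⟩
  · rw [← hrange]
    exact LinearMap.setOf_sub_smul_eq_range_sup_span hker u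
  · have hcodim := Submodule.finrank_quotient_sup_span_singleton_add_one hu
    rw [N.finrank_quotient_orthogonal, hm] at hcodim
    omega

/-- Image computation from Lemma 2.4: if `L` is a linear operator on a real Hilbert
space whose kernel `N` (viewed in `H`) has dimension `m` and whose range is `Nᗮ`, and `u ∉ Nᗮ`,
then `{L v - ν • u : v ∈ D, ⟪u, v⟫ = 0, ν ∈ ℝ}` equals the subspace `Nᗮ + ℝ • u`, which is
closed and of codimension `m - 1` in `H`. -/
theorem image_of_shifted_operator
    (H : Type*) [NormedAddCommGroup H] [InnerProductSpace ℝ H] [CompleteSpace H]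
    (D : Submodule ℝ H) (L : D →ₗ[ℝ] H)
    (N : Submodule ℝ H) (hN : N = (LinearMap.ker L).map D.subtype)
    (m : ℕ) [FiniteDimensional ℝ N] (hm : Module.finrank ℝ N = m)
    (hrange : LinearMap.range L = Nᗮ)
    (u : H) (hu : u ∉ Nᗮ) :
    {x : H | ∃ v : D, ∃ ν : ℝ, ⟪u, (v : H)⟫ = 0 ∧ x = L v - ν • u}
        = ((Nᗮ ⊔ ℝ ∙ u : Submodule ℝ H) : Set H) ∧
      IsClosed ((Nᗮ ⊔ ℝ ∙ u : Submodule ℝ H) : Set H) ∧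
      FiniteDimensional ℝ (H ⧸ (Nᗮ ⊔ ℝ ∙ u : Submodule ℝ H)) ∧
      Module.finrank ℝ (H ⧸ (Nᗮ ⊔ ℝ ∙ u : Submodule ℝ H)) = m - 1 :=
  image_of_shifted_operator_general H D L N hN m hm hrange u hu
end

section
/- Let g be a positive definite symmetric 3×3 real matrix, u ∈ ℝ³, λ ∈ ℝ, and define the antisymmetric 3×3 matrix ω by ω_{lm} := λ·√(det g)·Σ_{s} ε(l,m,s)·(g⁻¹u)_s (the coordinate form of the eigenvalue equation *_g du = λu). Then for every symmetric 3×3 real matrix h and every index k, the function t ↦ B(g + t·h, ω)_k, which is defined for all t in a neighborhood of 0 where g + t·h is positive definite, has derivative at t = 0 equal to λ·(h·(g⁻¹u))_k − (λ/2)·tr(g⁻¹h)·u_k. (This is the pointwise coordinate form of Lemma 2.1: if u is an eigenform of the Beltrami operator *_g d with eigenvalue λ, then D(*d)_g(h)u = λ h(u^♯, ·) − (λ/2)(tr_g h)·u.) -/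
/-- The Levi-Civita symbol on three indices, as a real number. -/
noncomputable def leviCivita (i j k : Fin 3) : ℝ :=
  (((j : ℕ) : ℝ) - ((i : ℕ) : ℝ)) * ((((k : ℕ) : ℝ)) - ((i : ℕ) : ℝ))
    * ((((k : ℕ) : ℝ)) - ((j : ℕ) : ℝ)) / 2

/-- The coordinate expression at a point of the Beltrami operator `*_a d` applied to a
1-form with exterior derivative `ω`: `B(a,ω)_k = (1/2)·√(det a)·∑ ε(i,j,k) a⁻¹_{il} a⁻¹_{jm} ω_{lm}`. -/
noncomputable def beltramiCoord (a ω : Matrix (Fin 3) (Fin 3) ℝ) (k : Fin 3) : ℝ :=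
  (1 / 2) * Real.sqrt a.det *
    ∑ i, ∑ j, ∑ l, ∑ m, leviCivita i j k * a⁻¹ i l * a⁻¹ j m * ω l m

/-
For an eigenform, `ω = c · ε(g⁻¹u)` with `c = λ √(det g)`. Contracting `ε` twice against
`adj a` gives `2 det a · a` (the cofactor matrix of the cofactor matrix), so for every `a` with
`det a > 0` the Beltrami operator collapses to `B(a, ω)_k = c (det a)^(-1/2) ((g⁻¹u)ᵀ a)_k`.
Differentiating this along `a = g + t h` with Jacobi's formula
`d/dt det (g + t h) = det g · tr (g⁻¹ h)` produces the two terms `λ h g⁻¹u` and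
`-(λ/2) tr (g⁻¹ h) u`.
-/

namespace Matrix

variable {n : Type*} [Fintype n] [DecidableEq n]

section NontriviallyNormedField

variable {𝕜 : Type*} [NontriviallyNormedField 𝕜]

theorem hasDerivAt_det_one_add_smul (M : Matrix n n 𝕜) :
    HasDerivAt (fun t : 𝕜 => (1 + t • M).det) M.trace 0 := by
  have hpoly := (det (1 + (Polynomial.X : Polynomial 𝕜) • M.map Polynomial.C)).hasDerivAt 0
  rw [derivative_det_one_add_X_smul] at hpoly
  convert hpoly using 2 with t
  simp [eval_det, ← smul_eq_mul_diagonal]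

theorem hasDerivAt_det_add_smul {g : Matrix n n 𝕜} (hg : IsUnit g.det) (h : Matrix n n 𝕜) :
    HasDerivAt (fun t : 𝕜 => (g + t • h).det) (g.det * (g⁻¹ * h).trace) 0 := by
  have hfac (t : 𝕜) : g + t • h = g * (1 + t • (g⁻¹ * h)) := by
    rw [mul_add, mul_one, mul_smul_comm, mul_nonsing_inv_cancel_left _ _ hg]
  simp only [hfac, det_mul]
  exact (hasDerivAt_det_one_add_smul _).const_mul _

end NontriviallyNormedField

theorem hasDerivAt_inv_sqrt_det_add_smul {g : Matrix n n ℝ} (hg : 0 < g.det)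
    (h : Matrix n n ℝ) :
    HasDerivAt (fun t : ℝ => (√(g + t • h).det)⁻¹) (-(g⁻¹ * h).trace / (2 * √g.det)) 0 := by
  have hinv := ((hasDerivAt_det_add_smul hg.ne'.isUnit h).sqrt (by simpa using hg.ne')).inv
    (by simpa using (Real.sqrt_pos.2 hg).ne')
  simp only [zero_smul, add_zero] at hinv
  refine hinv.congr_deriv ?_
  rw [Real.sq_sqrt hg.le]
  field_simp

end Matrix

open Matrix

theorem sum_leviCivita_adjugate_adjugate_leviCivita (a : Matrix (Fin 3) (Fin 3) ℝ) (k s : Fin 3) :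
    ∑ i, ∑ j, ∑ l, ∑ m, leviCivita i j k * a.adjugate i l * a.adjugate j m * leviCivita l m s
      = 2 * a.det * a s k := by
  -- the left side is twice the cofactor matrix of `adj a`, and `adj (adj a) = det a • a`
  fin_cases k <;> fin_cases s <;>
  · simp only [Fin.reduceFinMk, Fin.sum_univ_three]
    norm_num [leviCivita, adjugate_fin_three, det_fin_three, cons_val_two, cons_val_succ',
      tail_cons, head_cons]
    ring

theorem beltramiCoord_of_forall_eq_mul_sum_leviCivita {a : Matrix (Fin 3) (Fin 3) ℝ}
    (ha : 0 < a.det) {c : ℝ} {v : Fin 3 → ℝ} {ω : Matrix (Fin 3) (Fin 3) ℝ}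
    (hω : ∀ l m, ω l m = c * ∑ s, leviCivita l m s * v s) (k : Fin 3) :
    beltramiCoord a ω k = c / √a.det * (v ᵥ* a) k := by
  have hinv (i l : Fin 3) : a⁻¹ i l = a.det⁻¹ * a.adjugate i l := by
    rw [inv_def, Matrix.smul_apply, smul_eq_mul, Ring.inverse_eq_inv]
  have hsum : ∑ i, ∑ j, ∑ l, ∑ m, leviCivita i j k * a⁻¹ i l * a⁻¹ j m * ω l m
      = c * a.det⁻¹ ^ 2 * ∑ s, (∑ i, ∑ j, ∑ l, ∑ m,
          leviCivita i j k * a.adjugate i l * a.adjugate j m * leviCivita l m s) * v s := by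
    simp only [hω, hinv, Fin.sum_univ_three]
    ring
  rw [beltramiCoord, hsum]
  simp only [sum_leviCivita_adjugate_adjugate_leviCivita]
  simp only [vecMul, dotProduct, Fin.sum_univ_three]
  have hsqrt : √a.det ^ 2 = a.det := Real.sq_sqrt ha.le
  set S := √a.det
  rw [← hsqrt]
  field_simp

theorem deriv_beltramiCoord_eigenform_general
    (g : Matrix (Fin 3) (Fin 3) ℝ) (hg : g.PosDef)
    (u : Fin 3 → ℝ) (lam : ℝ)
    (ω : Matrix (Fin 3) (Fin 3) ℝ)
    (hω : ∀ l m, ω l m = lam * Real.sqrt g.det * ∑ s, leviCivita l m s * g⁻¹.mulVec u s)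
    (h : Matrix (Fin 3) (Fin 3) ℝ) (hsymm : h.IsSymm) (k : Fin 3) :
    HasDerivAt (fun t : ℝ => beltramiCoord (g + t • h) ω k)
      (lam * h.mulVec (g⁻¹.mulVec u) k - (lam / 2) * (g⁻¹ * h).trace * u k) 0 := by
  have hdet : 0 < g.det := hg.det_pos
  set v := g⁻¹ *ᵥ u with hv
  have hclosed : (fun t : ℝ => beltramiCoord (g + t • h) ω k) =ᶠ[nhds 0]
      fun t => lam * √g.det * ((√(g + t • h).det)⁻¹ * (v ᵥ* (g + t • h)) k) := by
    have hpos : ∀ᶠ t in nhds (0 : ℝ), 0 < (g + t • h).det :=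
      (hasDerivAt_det_add_smul hdet.ne'.isUnit h).continuousAt.eventually
        (eventually_gt_nhds (by simpa using hdet))
    filter_upwards [hpos] with t ht
    rw [beltramiCoord_of_forall_eq_mul_sum_leviCivita ht hω]
    ring
  have hlin : HasDerivAt (fun t : ℝ => (v ᵥ* (g + t • h)) k) ((v ᵥ* h) k) 0 := by
    simp only [vecMul_add, vecMul_smul, Pi.add_apply, Pi.smul_apply, smul_eq_mul]
    simpa using ((hasDerivAt_id (0 : ℝ)).mul_const ((v ᵥ* h) k)).const_add ((v ᵥ* g) k)
  have hgv : v ᵥ* g = u := by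
    rw [← (isHermitian_iff_isSymm.mp hg.isHermitian).eq, vecMul_transpose, hv, mulVec_mulVec,
      mul_nonsing_inv _ hdet.ne'.isUnit, one_mulVec]
  have hhv : v ᵥ* h = h *ᵥ v := by simpa only [hsymm.eq] using vecMul_transpose h v
  refine ((((hasDerivAt_inv_sqrt_det_add_smul hdet h).mul hlin).const_mul
    (lam * √g.det)).congr_of_eventuallyEq hclosed).congr_deriv ?_
  simp only [zero_smul, add_zero, hgv, hhv]
  field_simp
  ring

/-- Pointwise coordinate form of Lemma 2.1: if `u` is an eigenform of the Beltrami operator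
with eigenvalue `λ`, i.e. `ω_{lm} = λ √(det g) ∑_s ε(l,m,s) (g⁻¹u)_s`, then the variation of the
Beltrami operator in the direction of a symmetric matrix `h` is
`D(*d)_g(h)u = λ h(g⁻¹u) - (λ/2) tr(g⁻¹h) u`. -/
theorem deriv_beltramiCoord_eigenform
    (g : Matrix (Fin 3) (Fin 3) ℝ) (hg : g.PosDef) (hgsymm : g.IsSymm)
    (u : Fin 3 → ℝ) (lam : ℝ)
    (ω : Matrix (Fin 3) (Fin 3) ℝ)
    (hω : ∀ l m, ω l m = lam * Real.sqrt g.det * ∑ s, leviCivita l m s * g⁻¹.mulVec u s)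
    (h : Matrix (Fin 3) (Fin 3) ℝ) (hsymm : h.IsSymm) (k : Fin 3) :
    HasDerivAt (fun t : ℝ => beltramiCoord (g + t • h) ω k)
      (lam * h.mulVec (g⁻¹.mulVec u) k - (lam / 2) * (g⁻¹ * h).trace * u k) 0 :=
  deriv_beltramiCoord_eigenform_general g hg u lam ω hω h hsymm k
end

section
/- Let n ≥ 1 and r ≥ 1 be integers, let U ⊆ ℝⁿ be open, let w : U → ℝⁿ be of class C^r, let K ⊆ U be compact with w(x) ≠ 0 for every x ∈ K, and let v : U → ℝⁿ be of class C^r with support contained in K. Then there exists a map h : U → (n×n real matrices) of class C^r such that h(x) is a symmetric matrix for every x ∈ U and h(x)·w(x) = v(x) for every x ∈ U, where h(x)·w(x) denotes the matrix-vector product. -/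
/-!
Where `w ≠ 0`, an explicit symmetric matrix built from `w` and `v` sends `w` to `v` and is a
rational function of their coordinates, hence as smooth as they are. Where `w = 0` we are
outside the closed set `K`, so `v`, and with it the formula, vanishes on a neighbourhood.
-/

open Matrix

variable {ι : Type*} [Fintype ι]

/-- The first term sends `w` to `v + ⟨v, w⟩ w / |w|²`; the second removes the excess along `w`. -/
noncomputable def symmSending (w v : ι → ℝ) : Matrix ι ι ℝ :=
  (w ⬝ᵥ w)⁻¹ • (vecMulVec v w + vecMulVec w v) - ((v ⬝ᵥ w) / (w ⬝ᵥ w) ^ 2) • vecMulVec w w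

theorem symmSending_isSymm (w v : ι → ℝ) : (symmSending w v).IsSymm := by
  have hsum : (vecMulVec v w + vecMulVec w v).IsSymm := by
    simpa only [transpose_vecMulVec] using isSymm_add_transpose_self (vecMulVec v w)
  exact (hsum.smul _).sub (IsSymm.smul (transpose_vecMulVec w w) _)

@[simp] theorem symmSending_zero_right (w : ι → ℝ) : symmSending w 0 = 0 := by
  simp [symmSending]

theorem symmSending_mulVec {w : ι → ℝ} (hw : w ≠ 0) (v : ι → ℝ) : symmSending w v *ᵥ w = v := by
  have hww : w ⬝ᵥ w ≠ 0 := dotProduct_self_eq_zero.not.mpr hw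
  simp only [symmSending, sub_mulVec, smul_mulVec, add_mulVec, vecMulVec_mulVec, op_smul_eq_smul]
  match_scalars
  · field_simp
  · field_simp; ring

theorem ContDiffOn.symmSending {E : Type*} [NormedAddCommGroup E] [NormedSpace ℝ E]
    {s : Set E} {k : WithTop ℕ∞} {w v : E → ι → ℝ} (hw : ContDiffOn ℝ k w s)
    (hv : ContDiffOn ℝ k v s) (hw0 : ∀ x ∈ s, w x ≠ 0) :
    ContDiffOn ℝ k (fun x ↦ of.symm (symmSending (w x) (v x))) s := by
  have hw' := contDiffOn_pi.mp hw
  have hv' := contDiffOn_pi.mp hv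
  have hww : ContDiffOn ℝ k (fun x ↦ w x ⬝ᵥ w x) s := ContDiffOn.sum fun i _ ↦ (hw' i).mul (hw' i)
  have hvw : ContDiffOn ℝ k (fun x ↦ v x ⬝ᵥ w x) s := ContDiffOn.sum fun i _ ↦ (hv' i).mul (hw' i)
  have hww0 : ∀ x ∈ s, w x ⬝ᵥ w x ≠ 0 := fun x hx ↦ dotProduct_self_eq_zero.not.mpr (hw0 x hx)
  refine contDiffOn_pi.mpr fun i ↦ contDiffOn_pi.mpr fun j ↦ ?_
  exact ((hww.inv hww0).mul (((hv' i).mul (hw' j)).add ((hw' i).mul (hv' j)))).sub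
    ((hvw.div (hww.pow 2) fun x hx ↦ pow_ne_zero 2 (hww0 x hx)).mul ((hw' i).mul (hw' j)))

theorem exists_symm_matrix_field_mulVec_eq_general
    (n r : ℕ)
    (U : Set (Fin n → ℝ)) (hU : IsOpen U)
    (w : (Fin n → ℝ) → (Fin n → ℝ)) (hw : ContDiffOn ℝ r w U)
    (K : Set (Fin n → ℝ)) (hK : IsCompact K)
    (hwK : ∀ x ∈ K, w x ≠ 0)
    (v : (Fin n → ℝ) → (Fin n → ℝ)) (hv : ContDiffOn ℝ r v U)
    (hsupp : Function.support v ⊆ K) :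
    ∃ h : (Fin n → ℝ) → (Fin n → Fin n → ℝ),
      ContDiffOn ℝ r h U ∧
      (∀ x ∈ U, (Matrix.of (h x)).IsSymm) ∧
      (∀ x ∈ U, (Matrix.of (h x)).mulVec (w x) = v x) := by
  have hv0 : ∀ x ∉ K, v x = 0 := fun x hxK ↦ Function.notMem_support.mp fun hx ↦ hxK (hsupp hx)
  refine ⟨fun x ↦ of.symm (symmSending (w x) (v x)), ?_, fun x _ ↦ symmSending_isSymm _ _,
    fun x _ ↦ ?_⟩
  · refine contDiffOn_of_locally_contDiffOn fun x hx ↦ ?_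
    by_cases hwx : w x = 0
    · refine ⟨Kᶜ, hK.isClosed.isOpen_compl, fun hxK ↦ hwK x hxK hwx,
        (contDiffOn_const (c := 0)).congr ?_⟩
      intro y hy
      rw [hv0 y hy.2, symmSending_zero_right]
      rfl
    · refine ⟨U ∩ w ⁻¹' {0}ᶜ,
        hw.continuousOn.isOpen_inter_preimage hU isOpen_compl_singleton, ⟨hx, hwx⟩, ?_⟩
      exact ((hw.mono Set.inter_subset_left).symmSending (hv.mono Set.inter_subset_left)
        fun y hy ↦ hy.2).mono Set.inter_subset_right
  · by_cases hwx : w x = 0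
    · simp [hwx, hv0 x fun hxK ↦ hwK x hxK hwx]
    · exact symmSending_mulVec hwx (v x)

/-- Euclidean coordinate form of Lemma 2.2: if `w` is a `C^r` vector field on an open set
`U ⊆ ℝⁿ`, `K ⊆ U` is compact and disjoint from the zero set of `w`, then every `C^r` field
`v` supported in `K` can be written as `v(x) = h(x)·w(x)` for a `C^r` field `h` of symmetric
matrices on `U`. -/
theorem exists_symm_matrix_field_mulVec_eq
    (n r : ℕ) (hn : 1 ≤ n) (hr : 1 ≤ r)
    (U : Set (Fin n → ℝ)) (hU : IsOpen U)
    (w : (Fin n → ℝ) → (Fin n → ℝ)) (hw : ContDiffOn ℝ r w U)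
    (K : Set (Fin n → ℝ)) (hK : IsCompact K) (hKU : K ⊆ U)
    (hwK : ∀ x ∈ K, w x ≠ 0)
    (v : (Fin n → ℝ) → (Fin n → ℝ)) (hv : ContDiffOn ℝ r v U)
    (hsupp : Function.support v ⊆ K) :
    ∃ h : (Fin n → ℝ) → (Fin n → Fin n → ℝ),
      ContDiffOn ℝ r h U ∧
      (∀ x ∈ U, (Matrix.of (h x)).IsSymm) ∧
      (∀ x ∈ U, (Matrix.of (h x)).mulVec (w x) = v x) :=
  exists_symm_matrix_field_mulVec_eq_general n r U hU w hw K hK hwK v hv hsupp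
end
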